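/- arXiv:2010.07096 — 4 statements merged into one kernel-verified Lean document; each statement's English description precedes it below -/
import Mathlib

section
/- For every integer n ≥ 2, the identity ∑_{k=1}^{n-1} C(n,k) · k^{k-1} · (n-k)^{n-k-1} = 2(n-1) · n^{n-2} holds, where C(n,k) is the binomial coefficient. -/
/-!
Abel's identity `∑_{k=1}^m C(m,k) k^(k-1) (y + m - k)^(m-k) = m (y + m)^(m-1)` holds by strong
induction on `m`: expanding `(y + (m - k))^(m-k)` binomially in `y` and exchanging the sums turns
the left side into `∑_j C(m,j) y^j` times Abel sums of smaller size at `y = j`, except for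
`j = 0`, where Abel's sum at `y = 0` reduces to the one of size `m - 1` at `y = 1`.

The summand `T_k = C(n,k) k^(k-1) (n-k)^(n-k-1)` is symmetric under `k ↦ n - k`, so
`n ∑ T_k = 2 ∑ (n - k) T_k`, and since `(n - k) C(n,k) = n C(n-1,k)` the last sum is `n` times
Abel's sum of size `n - 1` at `y = 1`.
-/

open Finset

theorem Nat.choose_mul_choose_sub_comm (n k j : ℕ) :
    n.choose k * (n - k).choose j = n.choose j * (n - j).choose k := by
  have hk := Nat.choose_mul (n := n) (Nat.le_add_right k j)
  have hj := Nat.choose_mul (n := n) (Nat.le_add_left j k)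
  rw [Nat.add_sub_cancel_left, Nat.choose_symm_add] at hk
  rw [Nat.add_sub_cancel] at hj
  rw [← hk, ← hj]

section Abel

variable {R : Type*} [CommSemiring R]

/-- The sum starts at `k = 1` because `0 ^ (0 - 1) = 1` in `ℕ`. -/
def abelSum (m : ℕ) (y : R) : R :=
  ∑ k ∈ Icc 1 m, (m.choose k * k ^ (k - 1) * (y + (m - k : ℕ)) ^ (m - k) : R)

theorem succ_mul_abelSum_one (m : ℕ) :
    (m + 1) * abelSum m (1 : R)
      = ∑ k ∈ Icc 1 m,
          ((m + 1).choose k * k ^ (k - 1) * (m + 1 - k : ℕ) ^ (m + 1 - k) : R) := by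
  rw [abelSum, mul_sum]
  refine sum_congr rfl fun k hk => ?_
  have hc : ((m + 1).choose k * (m + 1 - k : ℕ) : R) = (m + 1) * m.choose k := by
    have := congrArg (Nat.cast : ℕ → R) ((Nat.choose_mul_succ_eq m k).symm.trans (mul_comm _ _))
    push_cast at this
    exact this
  obtain ⟨d, hd⟩ : ∃ d, m - k = d := ⟨_, rfl⟩
  have hd' : m + 1 - k = d + 1 := by simp only [mem_Icc] at hk; omega
  rw [hd'] at hc
  rw [hd, hd']
  push_cast at hc ⊢
  calc (m + 1) * (m.choose k * k ^ (k - 1) * (1 + d) ^ d : R)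
      = ((m + 1).choose k * (d + 1)) * (k ^ (k - 1) * (1 + d) ^ d) := by rw [hc]; ring
    _ = (m + 1).choose k * k ^ (k - 1) * (d + 1) ^ (d + 1) := by ring

theorem abelSum_succ_zero (m : ℕ) :
    abelSum (m + 1) (0 : R) = (m + 1) * abelSum m 1 + (m + 1) ^ m := by
  rw [abelSum, sum_Icc_succ_top (by omega), succ_mul_abelSum_one]
  simp

theorem abelSum_eq_sum_choose_mul_abelSum (n : ℕ) (y : R) :
    abelSum n y = ∑ j ∈ range (n + 1), y ^ j * n.choose j * abelSum (n - j) (j : R) := by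
  conv_lhs => rw [abelSum]; simp only [add_pow, mul_sum]
  rw [sum_comm' (t' := range (n + 1)) (s' := fun j => Icc 1 (n - j))
    (by intro k j; simp only [mem_Icc, mem_range]; omega)]
  refine sum_congr rfl fun j hj => ?_
  rw [abelSum, mul_sum]
  refine sum_congr rfl fun k hk => ?_
  simp only [mem_Icc] at hk
  have hsplit : ((n - k : ℕ) : R) = j + (n - j - k : ℕ) := by
    rw [← Nat.cast_add]; congr 1; omega
  have hc : (n.choose k * (n - k).choose j : R) = n.choose j * (n - j).choose k := by
    rw [← Nat.cast_mul, ← Nat.cast_mul, Nat.choose_mul_choose_sub_comm]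
  rw [← hsplit, show n - k - j = n - j - k by omega]
  calc (n.choose k * k ^ (k - 1) * (y ^ j * ((n - k : ℕ) : R) ^ (n - j - k) * (n - k).choose j))
      = (n.choose k * (n - k).choose j)
          * (y ^ j * k ^ (k - 1) * ((n - k : ℕ) : R) ^ (n - j - k)) := by ring
    _ = _ := by rw [hc]; ring

theorem abelSum_eq (m : ℕ) (y : R) : abelSum m y = m * (y + m) ^ (m - 1) := by
  induction m using Nat.strong_induction_on generalizing y with
  | _ m ih =>
  rcases m with _ | n
  · simp [abelSum]
  have hzero : abelSum (n + 1) (0 : R) = (n + 1) ^ (n + 1) := by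
    rw [abelSum_succ_zero, ih n (by omega)]
    rcases n with _ | n
    · simp
    · push_cast; ring
  have hterm : ∀ j ∈ range (n + 2), y ^ j * (n + 1).choose j * abelSum (n + 1 - j) (j : R)
      = (n + 1) * (y ^ j * (n + 1) ^ (n - j) * n.choose j) := by
    intro j hj
    rcases j with _ | j
    · simp [hzero, pow_succ']
    have hj : j ≤ n := by simp only [mem_range] at hj; omega
    have hc := congrArg (Nat.cast : ℕ → R) (Nat.choose_mul_succ_eq n (j + 1))
    have hsum : ((j + 1 : ℕ) : R) + ((n - j : ℕ) : R) = n + 1 := by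
      rw [← Nat.cast_add, show j + 1 + (n - j) = n + 1 by omega, Nat.cast_succ]
    rw [show n + 1 - (j + 1) = n - j by omega] at hc ⊢
    rw [ih (n - j) (by omega), hsum, show n - j - 1 = n - (j + 1) by omega]
    push_cast at hc
    calc y ^ (j + 1) * ((n + 1).choose (j + 1) : R) * ((n - j : ℕ) * (n + 1) ^ (n - (j + 1)))
        = ((n + 1).choose (j + 1) * (n - j : ℕ)) * (y ^ (j + 1) * (n + 1) ^ (n - (j + 1))) := by
          ring
      _ = _ := by rw [← hc]; ring
  rw [abelSum_eq_sum_choose_mul_abelSum, sum_congr rfl hterm, ← mul_sum, sum_range_succ,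
    Nat.choose_succ_self]
  simp [add_pow]

end Abel

theorem sum_sub_mul_choose_mul_pow_mul_pow (n : ℕ) :
    ∑ k ∈ Ico 1 n, (n - k) * (n.choose k * k ^ (k - 1) * (n - k) ^ (n - k - 1))
      = n * ((n - 1) * n ^ (n - 2)) := by
  rcases n with _ | m
  · simp
  calc _ = ∑ k ∈ Icc 1 m, (m + 1).choose k * k ^ (k - 1) * (m + 1 - k) ^ (m + 1 - k) := by
        rw [Ico_add_one_right_eq_Icc]
        refine sum_congr rfl fun k hk => ?_
        have hk : k ≤ m := (mem_Icc.mp hk).2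
        obtain ⟨d, hd⟩ : ∃ d, m + 1 - k = d + 1 := ⟨m - k, by omega⟩
        simp only [hd, Nat.add_sub_cancel, pow_succ]
        ring
    _ = (m + 1) * (m * (m + 1) ^ (m - 1)) := by
        simpa [abelSum_eq, add_comm] using (succ_mul_abelSum_one (R := ℕ) m).symm
    _ = _ := by simp

/-- For `n ≥ 2`: `∑_{k=1}^{n-1} C(n,k) k^{k-1} (n-k)^{n-k-1} = 2(n-1) n^{n-2}`. -/
theorem tree_identity (n : ℕ) (hn : 2 ≤ n) :
    ∑ k ∈ Finset.Ico 1 n, n.choose k * k ^ (k - 1) * (n - k) ^ (n - k - 1)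
      = 2 * (n - 1) * n ^ (n - 2) := by
  set T : ℕ → ℕ := fun k => n.choose k * k ^ (k - 1) * (n - k) ^ (n - k - 1) with hT
  have hsymm : ∑ k ∈ Ico 1 n, k * T k = ∑ k ∈ Ico 1 n, (n - k) * T k := by
    have hreflect := sum_Ico_reflect (fun k => k * T k) 1 (Nat.le_succ n)
    rw [Nat.add_sub_cancel_left, Nat.add_sub_cancel] at hreflect
    rw [← hreflect]
    refine sum_congr rfl fun k hk => ?_
    have hk : k ≤ n := (mem_Ico.mp hk).2.le
    simp only [hT, Nat.sub_sub_self hk, Nat.choose_symm hk]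
    ring
  apply Nat.eq_of_mul_eq_mul_left (by omega : 0 < n)
  calc n * ∑ k ∈ Ico 1 n, T k
      = ∑ k ∈ Ico 1 n, k * T k + ∑ k ∈ Ico 1 n, (n - k) * T k := by
        rw [mul_sum, ← sum_add_distrib]
        refine sum_congr rfl fun k hk => ?_
        rw [← add_mul, Nat.add_sub_cancel' (mem_Ico.mp hk).2.le]
    _ = n * (2 * (n - 1) * n ^ (n - 2)) := by
        rw [hsymm, hT, sum_sub_mul_choose_mul_pow_mul_pow]
        ring
end

section
/- For all real x > 0, the identity (x^3 + 3x + (x^2 + 1)·√(x^2 + 4)) / (√(x^2 + 4) − x) = (x/2 + √(x^2/4 + 1))^4 holds. -/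
/-- For all real `x > 0`:
`(x³ + 3x + (x²+1)√(x²+4)) / (√(x²+4) − x) = (x/2 + √(x²/4 + 1))⁴`. -/
theorem stmt2 (x : ℝ) (hx : 0 < x) :
    (x ^ 3 + 3 * x + (x ^ 2 + 1) * Real.sqrt (x ^ 2 + 4)) / (Real.sqrt (x ^ 2 + 4) - x)
      = (x / 2 + Real.sqrt (x ^ 2 / 4 + 1)) ^ 4 := by
  set s := Real.sqrt (x ^ 2 + 4) with hs
  have hs2 : s ^ 2 = x ^ 2 + 4 := Real.sq_sqrt (by positivity)
  have hsp : 0 ≤ s := Real.sqrt_nonneg _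
  have hxs : x < s := by nlinarith
  have h2 : Real.sqrt (x ^ 2 / 4 + 1) = s / 2 := by
    have h : (s / 2) ^ 2 = x ^ 2 / 4 + 1 := by nlinarith
    rw [← h, Real.sqrt_sq (by positivity)]
  rw [h2, div_eq_iff (by linarith)]
  linear_combination (-((3 * x + s) / 4 + (x + s) ^ 3 / 16)) * hs2
end

section
/- There exists a universal constant C > 0 such that for all m, t with 0 < t < m^{-2} and all x ∈ ℝ², the truncated covariance c_t^{m²}(x) := ∫_0^t e^{-m²s} · e^{-|x|²/(4s)} / (4πs) ds satisfies |c_t^{m²}(x) + (1/(2π)) · log(min(|x|/√t, 1))| ≤ C. -/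
open MeasureTheory Real


lemma aux_exp_inv {u : ℝ} (hu : 0 < u) : Real.exp (-u) ≤ 1 / u := by
  have h : u ≤ Real.exp u := le_trans (by linarith) (Real.add_one_le_exp u)
  rw [Real.exp_neg, inv_eq_one_div, div_le_div_iff₀ (Real.exp_pos u) hu]
  nlinarith [Real.exp_pos u]

lemma aux_exp_sq {u : ℝ} (hu : 0 < u) : Real.exp (-u) ≤ 4 / u ^ 2 := by
  have h1 : u / 2 ≤ Real.exp (u / 2) := le_trans (by linarith) (Real.add_one_le_exp _)
  have h3 : Real.exp (u / 2) ^ 2 = Real.exp u := by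
    rw [sq, ← Real.exp_add]; ring_nf
  have h2 : u ^ 2 / 4 ≤ Real.exp u := by nlinarith [Real.exp_pos (u / 2)]
  rw [Real.exp_neg, inv_eq_one_div, div_le_div_iff₀ (Real.exp_pos u) (by positivity)]
  nlinarith [Real.exp_pos u]

lemma integ_aux {c r t : ℝ} (hc : 0 ≤ c) (hr : 0 < r) (ht : 0 < t) :
    MeasureTheory.IntegrableOn
      (fun s => Real.exp (-c * s) * Real.exp (-r ^ 2 / (4 * s)) / (4 * Real.pi * s))
      (Set.Ioc 0 t) := by
  apply MeasureTheory.Measure.integrableOn_of_bounded (M := 1 / (Real.pi * r ^ 2))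
      measure_Ioc_lt_top.ne (by apply Measurable.aestronglyMeasurable; fun_prop)
  filter_upwards [ae_restrict_mem measurableSet_Ioc] with s hs
  have hs0 : 0 < s := hs.1
  have hpi := Real.pi_pos
  have hnn : 0 ≤ Real.exp (-c * s) * Real.exp (-r ^ 2 / (4 * s)) / (4 * Real.pi * s) := by
    positivity
  rw [Real.norm_eq_abs, abs_of_nonneg hnn]
  have h1 : Real.exp (-c * s) ≤ 1 := by
    apply Real.exp_le_one_iff.2; nlinarith
  have h2 : Real.exp (-r ^ 2 / (4 * s)) ≤ 4 * s / r ^ 2 := by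
    have : -r ^ 2 / (4 * s) = -(r ^ 2 / (4 * s)) := by ring
    rw [this]
    calc Real.exp (-(r ^ 2 / (4 * s))) ≤ 1 / (r ^ 2 / (4 * s)) :=
          aux_exp_inv (by positivity)
      _ = 4 * s / r ^ 2 := by field_simp
  have hnum : Real.exp (-c * s) * Real.exp (-r ^ 2 / (4 * s)) ≤ 4 * s / r ^ 2 := by
    calc Real.exp (-c * s) * Real.exp (-r ^ 2 / (4 * s)) ≤ 1 * (4 * s / r ^ 2) :=
          mul_le_mul h1 h2 (Real.exp_pos _).le zero_le_one
      _ = 4 * s / r ^ 2 := one_mul _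
  calc Real.exp (-c * s) * Real.exp (-r ^ 2 / (4 * s)) / (4 * Real.pi * s)
      ≤ (4 * s / r ^ 2) / (4 * Real.pi * s) := by gcongr
    _ = 1 / (Real.pi * r ^ 2) := by field_simp

lemma main_zero {m t : ℝ} (hm : 0 < m) (ht : 0 < t) :
    (∫ s in Set.Ioc (0 : ℝ) t,
        Real.exp (-m ^ 2 * s) * Real.exp (-(0:ℝ) ^ 2 / (4 * s)) / (4 * Real.pi * s)) = 0 := by
  have hpi := Real.pi_pos
  apply MeasureTheory.integral_undef
  intro h
  have hIoc : MeasureTheory.IntegrableOn (fun s => s⁻¹) (Set.Ioc (0:ℝ) t) := by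
    apply MeasureTheory.Integrable.mono (h.const_mul (4 * Real.pi * Real.exp (m ^ 2 * t)))
    · exact measurable_inv.aestronglyMeasurable
    · filter_upwards [ae_restrict_mem measurableSet_Ioc] with s hs
      have hs0 : 0 < s := hs.1
      have hst : s ≤ t := hs.2
      have hval : Real.exp (-m ^ 2 * s) * Real.exp (-(0:ℝ) ^ 2 / (4 * s)) / (4 * Real.pi * s)
          = Real.exp (-m ^ 2 * s) / (4 * Real.pi * s) := by
        norm_num
      rw [Real.norm_eq_abs, Real.norm_eq_abs, hval, abs_of_nonneg (by positivity),
        abs_of_nonneg (by positivity)]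
      have hexp : 1 ≤ Real.exp (m ^ 2 * t) * Real.exp (-m ^ 2 * s) := by
        rw [← Real.exp_add, ← Real.exp_zero]
        apply Real.exp_le_exp.2
        nlinarith
      have hrhs : 4 * Real.pi * Real.exp (m ^ 2 * t) *
            (Real.exp (-m ^ 2 * s) / (4 * Real.pi * s))
          = (Real.exp (m ^ 2 * t) * Real.exp (-m ^ 2 * s)) / s := by
        field_simp
      rw [hrhs, le_div_iff₀ hs0]
      calc s⁻¹ * s = 1 := inv_mul_cancel₀ hs0.ne'
        _ ≤ Real.exp (m ^ 2 * t) * Real.exp (-m ^ 2 * s) := hexp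
  have h2 : IntervalIntegrable (fun s => s⁻¹) volume 0 t :=
    (intervalIntegrable_iff_integrableOn_Ioc_of_le ht.le).2 hIoc
  rw [intervalIntegrable_inv_iff] at h2
  rcases h2 with h2 | h2
  · exact ht.ne h2
  · exact h2 (Set.left_mem_uIcc)

-- integrability of f on subintervals
lemma f_ii {c r t a b : ℝ} (hc : 0 ≤ c) (hr : 0 < r) (ht : 0 < t)
    (ha : 0 ≤ a) (hab : a ≤ b) (hb : b ≤ t) :
    IntervalIntegrable
      (fun s => Real.exp (-c * s) * Real.exp (-r ^ 2 / (4 * s)) / (4 * Real.pi * s))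
      volume a b := by
  rw [intervalIntegrable_iff_integrableOn_Ioc_of_le hab]
  exact (integ_aux hc hr ht).mono_set (Set.Ioc_subset_Ioc ha hb)

lemma g_ii {r t a b : ℝ} (hr : 0 < r) (ht : 0 < t)
    (ha : 0 ≤ a) (hab : a ≤ b) (hb : b ≤ t) :
    IntervalIntegrable (fun s => Real.exp (-r ^ 2 / (4 * s)) / (4 * Real.pi * s))
      volume a b := by
  have := f_ii (c := 0) le_rfl hr ht ha hab hb
  simpa using this

-- pointwise bound f ≤ g on Icc 0 t, plus g s ≤ 16 s / (π r⁴) when s ≤ r²/4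
lemma g_ptwise {r s : ℝ} (hr : 0 < r) (hs : 0 ≤ s) (hs' : s ≤ r ^ 2 / 4) :
    Real.exp (-r ^ 2 / (4 * s)) / (4 * Real.pi * s) ≤ 16 * s / (Real.pi * r ^ 4) := by
  have hpi := Real.pi_pos
  rcases eq_or_lt_of_le hs with h0 | h0
  · rw [← h0]; norm_num
  · have hu : (0:ℝ) < r ^ 2 / (4 * s) := by positivity
    have h1 : Real.exp (-r ^ 2 / (4 * s)) ≤ 64 * s ^ 2 / r ^ 4 := by
      have : -r ^ 2 / (4 * s) = -(r ^ 2 / (4 * s)) := by ring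
      rw [this]
      calc Real.exp (-(r ^ 2 / (4 * s))) ≤ 4 / (r ^ 2 / (4 * s)) ^ 2 := aux_exp_sq hu
        _ = 64 * s ^ 2 / r ^ 4 := by field_simp; ring
    calc Real.exp (-r ^ 2 / (4 * s)) / (4 * Real.pi * s)
        ≤ (64 * s ^ 2 / r ^ 4) / (4 * Real.pi * s) := by gcongr
      _ = 16 * s / (Real.pi * r ^ 4) := by field_simp; ring

-- ∫_0^b of the linear bound
lemma lin_int {r b : ℝ} (hr : 0 < r) (hb : 0 ≤ b) :
    (∫ s in (0:ℝ)..b, 16 * s / (Real.pi * r ^ 4)) = 8 * b ^ 2 / (Real.pi * r ^ 4) := by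
  have hpi := Real.pi_pos
  have h : (fun s : ℝ => 16 * s / (Real.pi * r ^ 4))
      = fun s : ℝ => (16 / (Real.pi * r ^ 4)) * s := by
    funext s; ring
  rw [h, intervalIntegral.integral_const_mul, integral_id]
  field_simp; ring

-- bound for ∫_0^b f when b ≤ r²/4
lemma head_bound {c r t b : ℝ} (hc : 0 ≤ c) (hr : 0 < r) (ht : 0 < t)
    (hb : 0 < b) (hbt : b ≤ t) (hbr : b ≤ r ^ 2 / 4) :
    (0 ≤ ∫ s in (0:ℝ)..b,
        Real.exp (-c * s) * Real.exp (-r ^ 2 / (4 * s)) / (4 * Real.pi * s)) ∧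
    (∫ s in (0:ℝ)..b,
        Real.exp (-c * s) * Real.exp (-r ^ 2 / (4 * s)) / (4 * Real.pi * s))
      ≤ 1 / (2 * Real.pi) := by
  have hpi := Real.pi_pos
  constructor
  · apply intervalIntegral.integral_nonneg hb.le
    intro s hs
    have hs0 : 0 ≤ s := hs.1
    exact div_nonneg (mul_nonneg (Real.exp_pos _).le (Real.exp_pos _).le) (by nlinarith)
  · have hmono : (∫ s in (0:ℝ)..b,
        Real.exp (-c * s) * Real.exp (-r ^ 2 / (4 * s)) / (4 * Real.pi * s))
        ≤ ∫ s in (0:ℝ)..b, 16 * s / (Real.pi * r ^ 4) := by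
      apply intervalIntegral.integral_mono_on hb.le (f_ii hc hr ht le_rfl hb.le hbt)
        (by apply Continuous.intervalIntegrable; continuity)
      intro s hs
      have hs0 : 0 ≤ s := hs.1
      have hsb : s ≤ r ^ 2 / 4 := le_trans hs.2 hbr
      calc Real.exp (-c * s) * Real.exp (-r ^ 2 / (4 * s)) / (4 * Real.pi * s)
          ≤ 1 * Real.exp (-r ^ 2 / (4 * s)) / (4 * Real.pi * s) := by
            gcongr
            apply Real.exp_le_one_iff.2
            nlinarith
        _ = Real.exp (-r ^ 2 / (4 * s)) / (4 * Real.pi * s) := by rw [one_mul]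
        _ ≤ 16 * s / (Real.pi * r ^ 4) := g_ptwise hr hs0 hsb
    rw [lin_int hr hb.le] at hmono
    have : 8 * b ^ 2 / (Real.pi * r ^ 4) ≤ 1 / (2 * Real.pi) := by
      rw [div_le_div_iff₀ (by positivity) (by positivity)]
      have hb2 : b ^ 2 ≤ (r ^ 2 / 4) ^ 2 := by nlinarith
      nlinarith [mul_le_mul_of_nonneg_right hb2 hpi.le]
    linarith

lemma K_val {a b : ℝ} (ha : 0 < a) (hb : 0 < b) :
    (∫ s in a..b, 1 / (4 * Real.pi * s)) = (1 / (4 * Real.pi)) * Real.log (b / a) := by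
  have h : (fun s : ℝ => 1 / (4 * Real.pi * s))
      = fun s : ℝ => (1 / (4 * Real.pi)) * (1 / s) := by
    funext s; simp [one_div, mul_inv]; ring
  rw [h, intervalIntegral.integral_const_mul, integral_one_div (Set.notMem_uIcc_of_lt ha hb)]

lemma inv_sq_int {a b : ℝ} (ha : 0 < a) (hb : 0 < b) (c : ℝ) :
    (∫ s in a..b, c / (16 * Real.pi * s ^ 2)) = (c / (16 * Real.pi)) * (a⁻¹ - b⁻¹) := by
  have h : (fun s : ℝ => c / (16 * Real.pi * s ^ 2))
      = fun s : ℝ => (c / (16 * Real.pi)) * (s : ℝ) ^ (-2 : ℤ) := by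
    funext s
    rw [zpow_neg, zpow_two, sq, div_eq_mul_inv, div_eq_mul_inv, mul_inv, mul_inv, mul_inv]
    ring
  rw [h, intervalIntegral.integral_const_mul,
    integral_zpow (Or.inr ⟨by norm_num, Set.notMem_uIcc_of_lt ha hb⟩)]
  norm_num
  exact Or.inl (by ring)

lemma cont_int_aux {a b : ℝ} (ha : 0 < a) (hab : a ≤ b) (F : ℝ → ℝ)
    (hF : ContinuousOn F {0}ᶜ) :
    IntervalIntegrable F volume a b := by
  apply ContinuousOn.intervalIntegrable
  apply hF.mono
  intro s hs
  rw [Set.uIcc_of_le hab] at hs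
  simp only [Set.mem_compl_iff, Set.mem_singleton_iff]
  have := hs.1
  intro h0
  rw [h0] at this
  exact absurd this (not_le.2 ha)

lemma tail_bounds {r t : ℝ} (hr : 0 < r) (ht : 0 < t) (hc : r ^ 2 / 4 ≤ t) :
    ((1 / (4 * Real.pi)) * Real.log (t / (r ^ 2 / 4)) - 1 / (4 * Real.pi)
        ≤ ∫ s in (r ^ 2 / 4)..t, Real.exp (-r ^ 2 / (4 * s)) / (4 * Real.pi * s)) ∧
    (∫ s in (r ^ 2 / 4)..t, Real.exp (-r ^ 2 / (4 * s)) / (4 * Real.pi * s))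
      ≤ (1 / (4 * Real.pi)) * Real.log (t / (r ^ 2 / 4)) := by
  have hpi := Real.pi_pos
  have ha : (0:ℝ) < r ^ 2 / 4 := by positivity
  have hg_int := g_ii hr ht ha.le hc le_rfl
  have hK_int : IntervalIntegrable (fun s : ℝ => 1 / (4 * Real.pi * s)) volume (r^2/4) t := by
    apply cont_int_aux ha hc
    apply ContinuousOn.div continuousOn_const (by fun_prop)
    intro s hs
    simp only [Set.mem_compl_iff, Set.mem_singleton_iff] at hs
    positivity
  have hL_int : IntervalIntegrable (fun s : ℝ => r ^ 2 / (16 * Real.pi * s ^ 2))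
      volume (r^2/4) t := by
    apply cont_int_aux ha hc
    apply ContinuousOn.div continuousOn_const (by fun_prop)
    intro s hs
    simp only [Set.mem_compl_iff, Set.mem_singleton_iff] at hs
    positivity
  constructor
  · have hmono : (∫ s in (r^2/4)..t,
        (1 / (4 * Real.pi * s) - r ^ 2 / (16 * Real.pi * s ^ 2)))
        ≤ ∫ s in (r^2/4)..t, Real.exp (-r ^ 2 / (4 * s)) / (4 * Real.pi * s) := by
      apply intervalIntegral.integral_mono_on hc (hK_int.sub hL_int) hg_int
      intro s hs
      have hs0 : 0 < s := lt_of_lt_of_le ha hs.1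
      have hexp : 1 - r ^ 2 / (4 * s) ≤ Real.exp (-r ^ 2 / (4 * s)) := by
        rw [neg_div]
        linarith [Real.add_one_le_exp (-(r ^ 2 / (4 * s)))]
      have heq : 1 / (4 * Real.pi * s) - r ^ 2 / (16 * Real.pi * s ^ 2)
          = (1 - r ^ 2 / (4 * s)) / (4 * Real.pi * s) := by
        field_simp; ring
      rw [heq]
      gcongr
    rw [intervalIntegral.integral_sub hK_int hL_int, K_val ha ht,
      inv_sq_int ha ht] at hmono
    have hinv : (r ^ 2 / 4 : ℝ)⁻¹ = 4 / r ^ 2 := by field_simp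
    have hbnd : (r ^ 2 / (16 * Real.pi)) * ((r ^ 2 / 4)⁻¹ - t⁻¹) ≤ 1 / (4 * Real.pi) := by
      rw [hinv]
      have h1 : (0:ℝ) ≤ t⁻¹ := by positivity
      have h2 : r ^ 2 / (16 * Real.pi) * (4 / r ^ 2) = 1 / (4 * Real.pi) := by
        field_simp; ring
      have h3 : (0:ℝ) < r ^ 2 / (16 * Real.pi) := by positivity
      nlinarith [mul_nonneg h3.le h1]
    linarith
  · refine le_trans (intervalIntegral.integral_mono_on hc hg_int hK_int ?_)
      (le_of_eq (K_val ha ht))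
    intro s hs
    have hs0 : 0 < s := lt_of_lt_of_le ha hs.1
    have hexp : Real.exp (-r ^ 2 / (4 * s)) ≤ 1 := by
      rw [neg_div]
      exact Real.exp_le_one_iff.2 (neg_nonpos.2 (by positivity))
    calc Real.exp (-r ^ 2 / (4 * s)) / (4 * Real.pi * s) ≤ 1 / (4 * Real.pi * s) := by gcongr
      _ = 1 / (4 * Real.pi * s) := rfl

lemma head_bound_g {r t b : ℝ} (hr : 0 < r) (ht : 0 < t)
    (hb : 0 < b) (hbt : b ≤ t) (hbr : b ≤ r ^ 2 / 4) :
    (0 ≤ ∫ s in (0:ℝ)..b, Real.exp (-r ^ 2 / (4 * s)) / (4 * Real.pi * s)) ∧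
    (∫ s in (0:ℝ)..b, Real.exp (-r ^ 2 / (4 * s)) / (4 * Real.pi * s))
      ≤ 1 / (2 * Real.pi) := by
  have := head_bound (c := 0) le_rfl hr ht hb hbt hbr
  simpa using this

lemma fg_mono {m r t : ℝ} (hm : 0 < m) (hr : 0 < r) (ht : 0 < t) :
    (∫ s in (0:ℝ)..t,
        Real.exp (-m ^ 2 * s) * Real.exp (-r ^ 2 / (4 * s)) / (4 * Real.pi * s))
      ≤ ∫ s in (0:ℝ)..t, Real.exp (-r ^ 2 / (4 * s)) / (4 * Real.pi * s) := by
  have hpi := Real.pi_pos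
  apply intervalIntegral.integral_mono_on ht.le
    (f_ii (sq_nonneg m) hr ht le_rfl ht.le le_rfl) (g_ii hr ht le_rfl ht.le le_rfl)
  intro s hs
  rcases eq_or_lt_of_le hs.1 with h0 | h0
  · rw [← h0]; norm_num
  · have h1 : Real.exp (-m ^ 2 * s) ≤ 1 := by
      apply Real.exp_le_one_iff.2
      nlinarith
    calc Real.exp (-m ^ 2 * s) * Real.exp (-r ^ 2 / (4 * s)) / (4 * Real.pi * s)
        ≤ 1 * Real.exp (-r ^ 2 / (4 * s)) / (4 * Real.pi * s) := by gcongr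
      _ = Real.exp (-r ^ 2 / (4 * s)) / (4 * Real.pi * s) := by rw [one_mul]

lemma gf_mono {m r t : ℝ} (hm : 0 < m) (hr : 0 < r) (ht : 0 < t) (hmt : m ^ 2 * t ≤ 1) :
    (∫ s in (0:ℝ)..t, Real.exp (-r ^ 2 / (4 * s)) / (4 * Real.pi * s))
      ≤ (∫ s in (0:ℝ)..t,
          Real.exp (-m ^ 2 * s) * Real.exp (-r ^ 2 / (4 * s)) / (4 * Real.pi * s))
        + 1 / (4 * Real.pi) := by
  have hpi := Real.pi_pos
  have hf_int := f_ii (c := m ^ 2) (sq_nonneg m) hr ht le_rfl ht.le le_rfl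
  have hstep : (∫ s in (0:ℝ)..t, Real.exp (-r ^ 2 / (4 * s)) / (4 * Real.pi * s))
      ≤ ∫ s in (0:ℝ)..t,
          (Real.exp (-m ^ 2 * s) * Real.exp (-r ^ 2 / (4 * s)) / (4 * Real.pi * s)
            + m ^ 2 / (4 * Real.pi)) := by
    apply intervalIntegral.integral_mono_on ht.le (g_ii hr ht le_rfl ht.le le_rfl)
      (hf_int.add intervalIntegrable_const)
    intro s hs
    rcases eq_or_lt_of_le hs.1 with h0 | h0
    · rw [← h0]; norm_num; positivity
    · have hexp1 : 1 - m ^ 2 * s ≤ Real.exp (-m ^ 2 * s) := by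
        rw [neg_mul]
        linarith [Real.add_one_le_exp (-(m ^ 2 * s))]
      have hexp2 : Real.exp (-r ^ 2 / (4 * s)) ≤ 1 := by
        rw [neg_div]
        exact Real.exp_le_one_iff.2 (neg_nonpos.2 (by positivity))
      have hle1 : Real.exp (-m ^ 2 * s) ≤ 1 := by
        rw [neg_mul]
        exact Real.exp_le_one_iff.2 (neg_nonpos.2 (by positivity))
      have key : (1 - Real.exp (-m ^ 2 * s)) * Real.exp (-r ^ 2 / (4 * s)) / (4 * Real.pi * s)
          ≤ m ^ 2 / (4 * Real.pi) := by
        rw [div_le_div_iff₀ (by positivity) (by positivity)]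
        have h2 : (1 - Real.exp (-m ^ 2 * s)) * Real.exp (-r ^ 2 / (4 * s)) ≤ (m ^ 2 * s) * 1 :=
          mul_le_mul (by linarith) hexp2 (Real.exp_pos _).le (by positivity)
        nlinarith [mul_le_mul_of_nonneg_right h2 (by positivity : (0:ℝ) ≤ 4 * Real.pi)]
      have heq : Real.exp (-r ^ 2 / (4 * s)) / (4 * Real.pi * s)
          = Real.exp (-m ^ 2 * s) * Real.exp (-r ^ 2 / (4 * s)) / (4 * Real.pi * s)
            + (1 - Real.exp (-m ^ 2 * s)) * Real.exp (-r ^ 2 / (4 * s)) / (4 * Real.pi * s) := by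
        field_simp
        ring
      rw [heq]
      linarith [key]
  rw [intervalIntegral.integral_add hf_int intervalIntegrable_const,
    intervalIntegral.integral_const] at hstep
  have hfin : (t - 0) • (m ^ 2 / (4 * Real.pi)) ≤ 1 / (4 * Real.pi) := by
    rw [smul_eq_mul, sub_zero]
    calc t * (m ^ 2 / (4 * Real.pi)) = (m ^ 2 * t) / (4 * Real.pi) := by ring
      _ ≤ 1 / (4 * Real.pi) := by gcongr
  linarith

lemma KL_bounds {r t : ℝ} (hr : 0 < r) (ht : 0 < t) (hcase : r ^ 2 / 4 < t) :
    0 ≤ (1 / (4 * Real.pi)) * Real.log (t / (r ^ 2 / 4))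
        + (1 / (2 * Real.pi)) * Real.log (min (r / Real.sqrt t) 1) ∧
    (1 / (4 * Real.pi)) * Real.log (t / (r ^ 2 / 4))
        + (1 / (2 * Real.pi)) * Real.log (min (r / Real.sqrt t) 1)
      ≤ Real.log 4 / (4 * Real.pi) := by
  have hpi := Real.pi_pos
  have hst : 0 < Real.sqrt t := Real.sqrt_pos.2 ht
  by_cases hrt : r ≤ Real.sqrt t
  · have hmin : min (r / Real.sqrt t) 1 = r / Real.sqrt t :=
      min_eq_left (by rw [div_le_one hst]; exact hrt)
    have hlog1 : Real.log (t / (r ^ 2 / 4)) = Real.log t - 2 * Real.log r + Real.log 4 := by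
      rw [Real.log_div ht.ne' (by positivity), Real.log_div (by positivity) (by norm_num),
        Real.log_pow]
      push_cast; ring
    have hlog2 : Real.log (r / Real.sqrt t) = Real.log r - Real.log t / 2 := by
      rw [Real.log_div hr.ne' hst.ne', Real.log_sqrt ht.le]
    have heq : (1 / (4 * Real.pi)) * Real.log (t / (r ^ 2 / 4))
        + (1 / (2 * Real.pi)) * Real.log (min (r / Real.sqrt t) 1)
        = Real.log 4 / (4 * Real.pi) := by
      rw [hmin, hlog1, hlog2]
      field_simp
      ring
    rw [heq]
    exact ⟨by positivity, le_rfl⟩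
  · push_neg at hrt
    have hmin : min (r / Real.sqrt t) 1 = 1 :=
      min_eq_right (by rw [le_div_iff₀ hst, one_mul]; exact hrt.le)
    rw [hmin, Real.log_one, mul_zero, add_zero]
    have h1 : 1 ≤ t / (r ^ 2 / 4) := by
      rw [le_div_iff₀ (by positivity : (0:ℝ) < r ^ 2 / 4), one_mul]
      linarith
    have h2 : t / (r ^ 2 / 4) ≤ 4 := by
      rw [div_le_iff₀ (by positivity : (0:ℝ) < r ^ 2 / 4)]
      nlinarith [Real.sq_sqrt ht.le, Real.sqrt_nonneg t]
    constructor
    · have := Real.log_nonneg h1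
      positivity
    · have h3 : Real.log (t / (r ^ 2 / 4)) ≤ Real.log 4 := Real.log_le_log (by positivity) h2
      rw [div_eq_mul_one_div (Real.log 4) (4 * Real.pi), mul_comm (Real.log 4)]
      exact mul_le_mul_of_nonneg_left h3 (by positivity)

lemma main_pos {m t r : ℝ} (hm : 0 < m) (ht : 0 < t) (hmt : m ^ 2 * t ≤ 1) (hr : 0 < r) :
    |(∫ s in Set.Ioc (0 : ℝ) t,
        Real.exp (-m ^ 2 * s) * Real.exp (-r ^ 2 / (4 * s)) / (4 * Real.pi * s))
      + (1 / (2 * Real.pi)) * Real.log (min (r / Real.sqrt t) 1)| ≤ 1 := by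
  have hpi := Real.pi_pos
  have hpi3 := Real.pi_gt_three
  have hlog4 : Real.log 4 ≤ 3 := by
    have := Real.log_le_sub_one_of_pos (by norm_num : (0:ℝ) < 4)
    linarith
  have e1 : 1 / (2 * Real.pi) ≤ 1 / 6 :=
    one_div_le_one_div_of_le (by norm_num) (by nlinarith)
  have e2 : Real.log 4 / (4 * Real.pi) ≤ 3 / 12 :=
    div_le_div₀ (by norm_num) hlog4 (by norm_num) (by nlinarith)
  have e3 : 1 / (4 * Real.pi) ≤ 1 / 12 :=
    one_div_le_one_div_of_le (by norm_num) (by nlinarith)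
  rw [← intervalIntegral.integral_of_le ht.le]
  by_cases hcase : t ≤ r ^ 2 / 4
  · -- short time: log term vanishes
    have hlog : Real.log (min (r / Real.sqrt t) 1) = 0 := by
      have h1 : (1:ℝ) ≤ r / Real.sqrt t := by
        rw [le_div_iff₀ (Real.sqrt_pos.2 ht), one_mul]
        calc Real.sqrt t ≤ Real.sqrt (r ^ 2) := Real.sqrt_le_sqrt (by nlinarith)
          _ = r := Real.sqrt_sq hr.le
      rw [min_eq_right h1, Real.log_one]
    rw [hlog, mul_zero, add_zero]
    obtain ⟨h0, h1⟩ := head_bound (sq_nonneg m) hr ht ht le_rfl hcase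
    rw [abs_of_nonneg h0]
    linarith
  · push_neg at hcase
    have ha : (0:ℝ) < r ^ 2 / 4 := by positivity
    have hIJ1 := fg_mono hm hr ht
    have hIJ2 := gf_mono hm hr ht hmt
    have hsplit : (∫ s in (0:ℝ)..t, Real.exp (-r ^ 2 / (4 * s)) / (4 * Real.pi * s))
        = (∫ s in (0:ℝ)..(r ^ 2 / 4), Real.exp (-r ^ 2 / (4 * s)) / (4 * Real.pi * s))
          + ∫ s in (r ^ 2 / 4)..t, Real.exp (-r ^ 2 / (4 * s)) / (4 * Real.pi * s) :=
      (intervalIntegral.integral_add_adjacent_intervals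
        (g_ii hr ht le_rfl ha.le hcase.le) (g_ii hr ht ha.le hcase.le le_rfl)).symm
    obtain ⟨hJ1a, hJ1b⟩ := head_bound_g hr ht ha hcase.le le_rfl
    obtain ⟨hJ2a, hJ2b⟩ := tail_bounds hr ht hcase.le
    obtain ⟨hKLa, hKLb⟩ := KL_bounds hr ht hcase
    rw [abs_le]
    constructor
    · linarith
    · linarith

open MeasureTheory

/-- There is a universal constant `C > 0` such that for all `0 < t < m⁻²` and `x ∈ ℝ²`,
the truncated covariance `c_t^{m²}(x) = ∫_0^t e^{-m²s} e^{-|x|²/(4s)}/(4πs) ds` satisfies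
`|c_t^{m²}(x) + (1/(2π)) log(min(|x|/√t, 1))| ≤ C`. -/
theorem stmt3 : ∃ C : ℝ, 0 < C ∧ ∀ (m t : ℝ) (x : EuclideanSpace ℝ (Fin 2)),
    0 < m → 0 < t → t < 1 / m ^ 2 →
    |(∫ s in Set.Ioc (0 : ℝ) t,
        Real.exp (-m ^ 2 * s) * Real.exp (-‖x‖ ^ 2 / (4 * s)) / (4 * Real.pi * s))
      + (1 / (2 * Real.pi)) * Real.log (min (‖x‖ / Real.sqrt t) 1)| ≤ C := by
  refine ⟨1, one_pos, ?_⟩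
  intro m t x hm ht htm
  have hmt : m ^ 2 * t ≤ 1 := by
    have hm2 : (0:ℝ) < m ^ 2 := by positivity
    rw [lt_div_iff₀ hm2] at htm
    linarith
  rcases eq_or_lt_of_le (norm_nonneg x) with hr | hr
  · rw [← hr, main_zero hm ht, zero_add]
    have hmin : min ((0:ℝ) / Real.sqrt t) 1 = 0 := by
      rw [zero_div]; exact min_eq_left zero_le_one
    rw [hmin, Real.log_zero, mul_zero, abs_zero]
    norm_num
  · exact main_pos hm ht hmt hr
end

section
/- For β ∈ (0, 6π), the function u ↦ |u|^{−β/(2π)} e^{−(β/(4π))Γ(0,|u|²)} on ℝ², where Γ(0,r) = ∫_r^∞ e^{-t}/t dt is the incomplete gamma function, is integrable on ℝ² if β > 4π, and for β = 4π one has ∫_{|u|≤R} |u|^{−2} e^{−Γ(0,|u|²)} du = 2π log R + O(1) as R → ∞. -/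
/-!
Since `e^{-t} ≥ 1 - t`, `Γ(0,s) ≥ ∫_s^1 (1/t - 1) dt ≥ -log s - 1` for `0 < s ≤ 1`, so
`e^{-cΓ(0,r²)} ≤ (e r²)^c` exactly cancels the singularity `r^{-2c}` at the origin, while
`0 ≤ Γ(0,s) ≤ e^{-s}/s` for all `s > 0`. Hence, with `c = β/(4π)`, the first integrand is at most
`e^c (2/(1+|u|))^{2c}`, which is integrable on `ℝ²` once `2c > 2`. For `β = 4π`, polar
coordinates turn the integral over `|u| ≤ R` into `2π ∫_0^R e^{-Γ(0,r²)}/r dr`; this integrand is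
at most `e` on `(0,1]`, and on `[1,∞)` it differs from `1/r` by at most `r^{-3}`.
-/

open MeasureTheory Set Real

-- `Γ(0,s)`; for `s ≤ 0` the integral diverges and the Bochner integral is `0`.
noncomputable def upperGammaZero (s : ℝ) : ℝ := ∫ t in Ioi s, exp (-t) / t

theorem measurable_upperGammaZero : Measurable upperGammaZero := by
  have h : Measurable fun p : ℝ × ℝ => {q : ℝ × ℝ | q.1 < q.2}.indicator
      (fun q => exp (-q.2) / q.2) p :=
    Measurable.indicator (by fun_prop) measurableSet_lt'
  convert (h.stronglyMeasurable.integral_prod_right' (ν := volume)).measurable using 2 with s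
  rw [upperGammaZero, ← integral_indicator measurableSet_Ioi]
  rfl

theorem integrableOn_exp_neg_div_self_Ioi {s : ℝ} (hs : 0 < s) :
    IntegrableOn (fun t => exp (-t) / t) (Ioi s) := by
  refine ((exp_neg_integrableOn_Ioi s one_pos).div_const s).mono'
    (by fun_prop : Measurable fun t : ℝ => exp (-t) / t).aestronglyMeasurable.restrict ?_
  filter_upwards [ae_restrict_mem measurableSet_Ioi] with t (ht : s < t)
  have : 0 < t := hs.trans ht
  rw [norm_of_nonneg (by positivity), neg_mul, one_mul]
  gcongr

theorem upperGammaZero_nonneg {s : ℝ} (hs : 0 ≤ s) : 0 ≤ upperGammaZero s :=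
  setIntegral_nonneg measurableSet_Ioi fun t (ht : s < t) => by
    have : 0 < t := hs.trans_lt ht
    positivity

theorem upperGammaZero_le_exp_neg_div {s : ℝ} (hs : 0 < s) :
    upperGammaZero s ≤ exp (-s) / s :=
  calc upperGammaZero s ≤ ∫ t in Ioi s, exp (-t) / s :=
        setIntegral_mono_on (integrableOn_exp_neg_div_self_Ioi hs)
          ((integrableOn_exp_neg_Ioi s).div_const s) measurableSet_Ioi
          fun t (ht : s < t) => by gcongr
    _ = exp (-s) / s := by rw [integral_div, integral_exp_neg_Ioi]

theorem neg_log_sub_one_le_upperGammaZero {s : ℝ} (hs0 : 0 < s) (hs1 : s ≤ 1) :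
    -log s - 1 ≤ upperGammaZero s := by
  have hinv : IntervalIntegrable (fun t : ℝ => t⁻¹) volume s 1 :=
    intervalIntegral.intervalIntegrable_inv
      (fun t ht => (hs0.trans_le (uIcc_of_le hs1 ▸ ht).1).ne') continuousOn_id
  have hint : IntegrableOn (fun t : ℝ => t⁻¹ - 1) (Ioc s 1) :=
    (intervalIntegrable_iff_integrableOn_Ioc_of_le hs1).1 (hinv.sub intervalIntegrable_const)
  calc -log s - 1 ≤ -log s - (1 - s) := by linarith
    _ = ∫ t in Ioc s 1, (t⁻¹ - 1) := by
        rw [← intervalIntegral.integral_of_le hs1, intervalIntegral.integral_sub hinv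
          intervalIntegrable_const, integral_inv_of_pos hs0 one_pos]
        simp
    _ ≤ ∫ t in Ioc s 1, exp (-t) / t :=
        setIntegral_mono_on hint ((integrableOn_exp_neg_div_self_Ioi hs0).mono_set
          Ioc_subset_Ioi_self) measurableSet_Ioc fun t ht => by
          have ht0 : 0 < t := hs0.trans ht.1
          rw [inv_eq_one_div, div_sub' ht0.ne', div_le_div_iff_of_pos_right ht0]
          linarith [add_one_le_exp (-t)]
    _ ≤ upperGammaZero s :=
        setIntegral_mono_set (integrableOn_exp_neg_div_self_Ioi hs0)
          ((ae_restrict_mem measurableSet_Ioi).mono fun t (ht : s < t) => by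
            have : 0 < t := hs0.trans ht
            positivity)
          Ioc_subset_Ioi_self.eventuallyLE

theorem exp_neg_upperGammaZero_le_exp_one_mul {s : ℝ} (hs0 : 0 < s) (hs1 : s ≤ 1) :
    exp (-upperGammaZero s) ≤ exp 1 * s :=
  calc exp (-upperGammaZero s) ≤ exp (log s + 1) := by
        gcongr; linarith [neg_log_sub_one_le_upperGammaZero hs0 hs1]
    _ = exp 1 * s := by rw [exp_add, exp_log hs0, mul_comm]

theorem exp_neg_mul_upperGammaZero_le_one {c s : ℝ} (hc : 0 ≤ c) (hs : 0 ≤ s) :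
    exp (-c * upperGammaZero s) ≤ 1 := by
  rw [exp_le_one_iff, neg_mul, neg_nonpos]
  exact mul_nonneg hc (upperGammaZero_nonneg hs)

theorem rpow_neg_mul_exp_neg_mul_upperGammaZero_sq_le_exp {c r : ℝ} (hc : 0 ≤ c) (hr0 : 0 ≤ r)
    (hr1 : r ≤ 1) : r ^ (-(2 * c)) * exp (-c * upperGammaZero (r ^ 2)) ≤ exp c := by
  rcases hr0.eq_or_lt with rfl | hr0
  · calc (0 : ℝ) ^ (-(2 * c)) * exp (-c * upperGammaZero (0 ^ 2)) ≤ 1 * 1 :=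
          mul_le_mul (zero_rpow_le_one _) (exp_neg_mul_upperGammaZero_le_one hc (sq_nonneg 0))
            (by positivity) zero_le_one
      _ ≤ exp c := by simpa using hc
  have hsq : 0 < r ^ 2 := by positivity
  calc r ^ (-(2 * c)) * exp (-c * upperGammaZero (r ^ 2))
      = r ^ (-(2 * c)) * exp (-upperGammaZero (r ^ 2)) ^ c := by
        rw [← exp_mul, neg_mul_comm, mul_comm c]
    _ ≤ r ^ (-(2 * c)) * (exp 1 * r ^ 2) ^ c := by
        gcongr
        exact exp_neg_upperGammaZero_le_exp_one_mul hsq (pow_le_one₀ hr0.le hr1)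
    _ = exp c := by
        rw [mul_rpow (exp_pos 1).le hsq.le, ← exp_mul, one_mul, ← rpow_natCast,
          ← rpow_mul hr0.le, mul_left_comm, ← rpow_add hr0]
        simp

theorem rpow_neg_mul_exp_neg_mul_upperGammaZero_sq_le {c r : ℝ} (hc : 0 ≤ c) (hr : 0 ≤ r) :
    r ^ (-(2 * c)) * exp (-c * upperGammaZero (r ^ 2)) ≤ exp c * (2 / (1 + r)) ^ (2 * c) := by
  rcases le_total r 1 with hr1 | hr1
  · refine (rpow_neg_mul_exp_neg_mul_upperGammaZero_sq_le_exp hc hr hr1).trans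
      (le_mul_of_one_le_right (exp_pos c).le (one_le_rpow ?_ (by positivity)))
    rw [one_le_div (by positivity)]
    linarith
  · calc r ^ (-(2 * c)) * exp (-c * upperGammaZero (r ^ 2)) ≤ r⁻¹ ^ (2 * c) := by
          rw [rpow_neg hr, ← inv_rpow hr]
          exact mul_le_of_le_one_right (by positivity)
            (exp_neg_mul_upperGammaZero_le_one hc (sq_nonneg r))
      _ ≤ (2 / (1 + r)) ^ (2 * c) := by
          gcongr
          rw [inv_eq_one_div, div_le_div_iff₀ (by positivity) (by positivity)]
          linarith
      _ ≤ exp c * (2 / (1 + r)) ^ (2 * c) :=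
          le_mul_of_one_le_left (by positivity) (one_le_exp hc)

theorem integrable_rpow_neg_mul_exp_neg_mul_upperGammaZero_sq {E : Type*}
    [NormedAddCommGroup E] [NormedSpace ℝ E] [FiniteDimensional ℝ E] [MeasurableSpace E]
    [BorelSpace E] (μ : Measure E) [μ.IsAddHaarMeasure] {c : ℝ}
    (hc : (Module.finrank ℝ E : ℝ) < 2 * c) :
    Integrable (fun u : E => ‖u‖ ^ (-(2 * c)) * exp (-c * upperGammaZero (‖u‖ ^ 2))) μ := by
  have hc0 : 0 ≤ c := by linarith [(Module.finrank ℝ E).cast_nonneg (α := ℝ)]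
  refine ((integrable_one_add_norm hc).const_mul (exp c * 2 ^ (2 * c))).mono'
    (by have := measurable_upperGammaZero; fun_prop : Measurable _).aestronglyMeasurable
    (.of_forall fun u => ?_)
  rw [norm_of_nonneg (by positivity), mul_assoc, rpow_neg (by positivity : 0 ≤ 1 + ‖u‖),
    ← div_eq_mul_inv, ← div_rpow zero_le_two (by positivity)]
  exact rpow_neg_mul_exp_neg_mul_upperGammaZero_sq_le hc0 (norm_nonneg u)

theorem setIntegral_norm_le_eq_two_pi_mul (f : ℝ → ℝ) (R : ℝ) :
    ∫ u in {u : EuclideanSpace ℝ (Fin 2) | ‖u‖ ≤ R}, f ‖u‖ = 2 * π * ∫ r in Ioc 0 R, r * f r := by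
  have hset : MeasurableSet {u : EuclideanSpace ℝ (Fin 2) | ‖u‖ ≤ R} :=
    measurableSet_le (by fun_prop) measurable_const
  rw [← integral_indicator hset]
  change ∫ u, (Iic R).indicator f ‖u‖ = _
  simp only [integral_fun_norm_addHaar, finrank_euclideanSpace_fin, Nat.add_one_sub_one, pow_one,
    smul_eq_mul]
  have hmul : (fun r => r * (Iic R).indicator f r) = (Iic R).indicator fun r => r * f r :=
    funext fun r => (indicator_mul_right _ id f).symm
  rw [hmul, integral_indicator measurableSet_Iic, Measure.restrict_restrict measurableSet_Iic,
    Iic_inter_Ioi]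
  simp only [Measure.real, EuclideanSpace.volume_ball_fin_two, ENNReal.ofReal_one, one_pow,
    one_mul, ENNReal.toReal_ofReal pi_nonneg, nsmul_eq_mul, Nat.cast_ofNat]
  ring

theorem norm_exp_neg_upperGammaZero_sq_div_le {r : ℝ} (hr : 0 < r) :
    ‖exp (-upperGammaZero (r ^ 2)) / r‖ ≤ exp 1 := by
  rw [norm_of_nonneg (by positivity), div_le_iff₀ hr]
  rcases le_total r 1 with hr1 | hr1
  · calc exp (-upperGammaZero (r ^ 2)) ≤ exp 1 * r ^ 2 :=
          exp_neg_upperGammaZero_le_exp_one_mul (by positivity) (pow_le_one₀ hr.le hr1)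
      _ ≤ exp 1 * r := by gcongr; nlinarith
  · calc exp (-upperGammaZero (r ^ 2)) ≤ 1 := by
          simpa using exp_neg_mul_upperGammaZero_le_one zero_le_one (sq_nonneg r)
      _ ≤ exp 1 * r := one_le_mul_of_one_le_of_one_le (one_le_exp zero_le_one) hr1

theorem abs_exp_neg_upperGammaZero_sq_div_sub_inv_le {r : ℝ} (hr : 1 ≤ r) :
    |exp (-upperGammaZero (r ^ 2)) / r - r⁻¹| ≤ r ^ (-3 : ℝ) := by
  have hr0 : 0 < r := one_pos.trans_le hr
  set G := upperGammaZero (r ^ 2)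
  have hG1 : exp (-G) ≤ 1 := by
    simpa using exp_neg_mul_upperGammaZero_le_one zero_le_one (sq_nonneg r)
  have hG : G ≤ (r ^ 2)⁻¹ :=
    calc G ≤ exp (-r ^ 2) / r ^ 2 := upperGammaZero_le_exp_neg_div (by positivity)
      _ ≤ (r ^ 2)⁻¹ := by
          rw [inv_eq_one_div]
          gcongr
          exact exp_le_one_iff.2 (by nlinarith)
  calc |exp (-G) / r - r⁻¹| = (1 - exp (-G)) / r := by
        rw [abs_sub_comm, abs_of_nonneg (by rw [sub_nonneg, inv_eq_one_div]; gcongr)]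
        field_simp
    _ ≤ (r ^ 2)⁻¹ / r := by gcongr; linarith [add_one_le_exp (-G)]
    _ = r ^ (-3 : ℝ) := by
        rw [rpow_neg hr0.le, show (3 : ℝ) = (3 : ℕ) by norm_num, rpow_natCast]
        field_simp

theorem integrableOn_exp_neg_upperGammaZero_sq_div (R : ℝ) :
    IntegrableOn (fun r => exp (-upperGammaZero (r ^ 2)) / r) (Ioc 0 R) :=
  Measure.integrableOn_of_bounded (measure_Ioc_lt_top (μ := volume)).ne
    (by have := measurable_upperGammaZero; fun_prop : Measurable _).aestronglyMeasurable
    ((ae_restrict_mem measurableSet_Ioc).mono fun _ hr =>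
      norm_exp_neg_upperGammaZero_sq_div_le hr.1)

theorem abs_setIntegral_Ioc_zero_one_exp_neg_upperGammaZero_sq_div_le :
    |∫ r in Ioc 0 1, exp (-upperGammaZero (r ^ 2)) / r| ≤ exp 1 := by
  simpa using norm_setIntegral_le_of_norm_le_const
    (measure_Ioc_lt_top (μ := volume) (a := (0 : ℝ)) (b := 1)) fun _ hr =>
      norm_exp_neg_upperGammaZero_sq_div_le hr.1

theorem abs_setIntegral_Ioc_one_exp_neg_upperGammaZero_sq_div_sub_log_le {R : ℝ} (hR : 1 ≤ R) :
    |(∫ r in Ioc 1 R, exp (-upperGammaZero (r ^ 2)) / r) - log R| ≤ 1 / 2 := by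
  have hinv' : IntervalIntegrable (fun r : ℝ => r⁻¹) volume 1 R :=
    intervalIntegral.intervalIntegrable_inv
      (fun r hr => (one_pos.trans_le (uIcc_of_le hR ▸ hr).1).ne') continuousOn_id
  have hinv := (intervalIntegrable_iff_integrableOn_Ioc_of_le hR).1 hinv'
  have hlog : ∫ r in Ioc 1 R, r⁻¹ = log R := by
    rw [← intervalIntegral.integral_of_le hR, integral_inv_of_pos one_pos (by linarith), div_one]
  have hq := (integrableOn_exp_neg_upperGammaZero_sq_div R).mono_set
    (Ioc_subset_Ioc_left zero_le_one)
  have hcube : IntegrableOn (fun r : ℝ => r ^ (-3 : ℝ)) (Ioi 1) :=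
    integrableOn_Ioi_rpow_of_lt (by norm_num) one_pos
  calc |(∫ r in Ioc 1 R, exp (-upperGammaZero (r ^ 2)) / r) - log R|
      = |∫ r in Ioc 1 R, (exp (-upperGammaZero (r ^ 2)) / r - r⁻¹)| := by
        rw [integral_sub hq hinv, hlog]
    _ ≤ ∫ r in Ioc 1 R, |exp (-upperGammaZero (r ^ 2)) / r - r⁻¹| :=
        abs_integral_le_integral_abs
    _ ≤ ∫ r in Ioc 1 R, r ^ (-3 : ℝ) :=
        setIntegral_mono_on (hq.sub hinv).abs (hcube.mono_set Ioc_subset_Ioi_self)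
          measurableSet_Ioc fun r hr => abs_exp_neg_upperGammaZero_sq_div_sub_inv_le hr.1.le
    _ ≤ ∫ r in Ioi 1, r ^ (-3 : ℝ) :=
        setIntegral_mono_set hcube ((ae_restrict_mem measurableSet_Ioi).mono
          fun r (hr : 1 < r) => rpow_nonneg (by linarith) _) Ioc_subset_Ioi_self.eventuallyLE
    _ = 1 / 2 := by rw [integral_Ioi_rpow_of_lt (by norm_num) one_pos]; norm_num

theorem abs_setIntegral_norm_le_exp_neg_upperGammaZero_div_sq_sub_le {R : ℝ} (hR : 1 ≤ R) :
    |(∫ u in {u : EuclideanSpace ℝ (Fin 2) | ‖u‖ ≤ R},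
        exp (-upperGammaZero (‖u‖ ^ 2)) / ‖u‖ ^ 2) - 2 * π * log R|
      ≤ 2 * π * (exp 1 + 1 / 2) := by
  have hint := integrableOn_exp_neg_upperGammaZero_sq_div R
  have hpolar : ∫ u in {u : EuclideanSpace ℝ (Fin 2) | ‖u‖ ≤ R},
      exp (-upperGammaZero (‖u‖ ^ 2)) / ‖u‖ ^ 2
        = 2 * π * ∫ r in Ioc 0 R, exp (-upperGammaZero (r ^ 2)) / r := by
    rw [setIntegral_norm_le_eq_two_pi_mul (fun r => exp (-upperGammaZero (r ^ 2)) / r ^ 2)]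
    congr 1
    refine setIntegral_congr_fun measurableSet_Ioc fun r hr => ?_
    field_simp [hr.1.ne']
  have hsplit : ∫ r in Ioc 0 R, exp (-upperGammaZero (r ^ 2)) / r
      = (∫ r in Ioc 0 1, exp (-upperGammaZero (r ^ 2)) / r)
        + ∫ r in Ioc 1 R, exp (-upperGammaZero (r ^ 2)) / r := by
    rw [← setIntegral_union (Ioc_disjoint_Ioc_of_le le_rfl) measurableSet_Ioc
      (hint.mono_set (Ioc_subset_Ioc_right hR)) (hint.mono_set (Ioc_subset_Ioc_left zero_le_one)),
      Ioc_union_Ioc_eq_Ioc zero_le_one hR]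
  rw [hpolar, hsplit, ← mul_sub, abs_mul, abs_of_pos two_pi_pos, add_sub_assoc]
  gcongr
  exact (abs_add_le _ _).trans (add_le_add
    abs_setIntegral_Ioc_zero_one_exp_neg_upperGammaZero_sq_div_le
    (abs_setIntegral_Ioc_one_exp_neg_upperGammaZero_sq_div_sub_log_le hR))

/-- With `Γ(0,r) = ∫_r^∞ e^{-t}/t dt`, the function `u ↦ |u|^{−β/(2π)} e^{−(β/(4π))Γ(0,|u|²)}`
on `ℝ²` is integrable for `4π < β < 6π`, and for `β = 4π`,
`∫_{|u|≤R} |u|^{−2} e^{−Γ(0,|u|²)} du = 2π log R + O(1)` as `R → ∞`. -/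
theorem stmt17 :
    (∀ β : ℝ, 4 * Real.pi < β → β < 6 * Real.pi →
      Integrable (fun u : EuclideanSpace ℝ (Fin 2) =>
        ‖u‖ ^ (-(β / (2 * Real.pi))) *
          Real.exp (-(β / (4 * Real.pi)) * ∫ t in Set.Ioi (‖u‖ ^ 2), Real.exp (-t) / t))) ∧
    (∃ C : ℝ, ∀ R : ℝ, 2 ≤ R →
      |(∫ u in {u : EuclideanSpace ℝ (Fin 2) | ‖u‖ ≤ R},
          Real.exp (-(∫ t in Set.Ioi (‖u‖ ^ 2), Real.exp (-t) / t)) / ‖u‖ ^ 2)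
        - 2 * Real.pi * Real.log R| ≤ C) := by
  refine ⟨fun β hβ _ => ?_, _, fun R hR =>
    abs_setIntegral_norm_le_exp_neg_upperGammaZero_div_sq_sub_le (by linarith)⟩
  rw [show β / (2 * π) = 2 * (β / (4 * π)) by field_simp; ring]
  refine integrable_rpow_neg_mul_exp_neg_mul_upperGammaZero_sq volume ?_
  rw [finrank_euclideanSpace_fin, Nat.cast_ofNat, mul_div_assoc', lt_div_iff₀ (by positivity)]
  linarith
end
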